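/- Inversion for variables: if Γ ⊢ x : A in the type system induced by an intersection type theory 𝒯 and A is not equivalent to 𝖴, then x is declared in Γ and Γ(x) ≤_𝒯 A. -/
import Mathlib


/-- Pure λ-terms with variables named by natural numbers. -/
inductive Tm : Type
  | var : ℕ → Tm
  | lam : ℕ → Tm → Tm
  | app : Tm → Tm → Tm
deriving DecidableEq

namespace Tm

/-- Free variables of a term. -/
def fv : Tm → Finset ℕ
  | var x => {x}
  | lam x t => fv t \ {x}
  | app t u => fv t ∪ fv u

/-- A variable fresh for a given finite set of variables. -/
def fresh (s : Finset ℕ) : ℕ := (s.sup id) + 1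

/-- Capture-avoiding simultaneous substitution. -/
def subst (σ : ℕ → Tm) : Tm → Tm
  | var x => σ x
  | app t u => app (subst σ t) (subst σ u)
  | lam x t =>
      let y := fresh ((fv t \ {x}).biUnion fun z => fv (σ z))
      lam y (subst (fun z => if z = x then var y else σ z) t)

/-- `M[x := N]`. -/
def subst1 (x : ℕ) (N M : Tm) : Tm :=
  subst (fun z => if z = x then N else var z) M

/-- `λx₁…xₙ. t`. -/
def lams (xs : List ℕ) (t : Tm) : Tm := xs.foldr lam t

/-- `t M₁ ⋯ Mₘ`. -/
def apps (t : Tm) (ts : List Tm) : Tm := ts.foldl app t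

/-- One-step β-reduction: contextual closure of the β-rule. -/
inductive Step : Tm → Tm → Prop
  | beta (x : ℕ) (M N : Tm) : Step (app (lam x M) N) (subst1 x N M)
  | appL {M M' : Tm} (N : Tm) : Step M M' → Step (app M N) (app M' N)
  | appR (M : Tm) {N N' : Tm} : Step N N' → Step (app M N) (app M N')
  | abs (x : ℕ) {M M' : Tm} : Step M M' → Step (lam x M) (lam x M')

/-- β-reduction: reflexive-transitive closure of one-step β-reduction. -/
def Red : Tm → Tm → Prop := Relation.ReflTransGen Step

/-- β-convertibility: the equivalence relation generated by β-reduction. -/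
def Conv : Tm → Tm → Prop := Relation.EqvGen Step

/-- `M` is solvable if `(λx⃗.M) N₁ ⋯ Nₙ` β-reduces to the identity,
where `x⃗` covers the free variables of `M`. -/
def Solvable (M : Tm) : Prop :=
  ∃ (xs : List ℕ) (Ns : List Tm) (y : ℕ),
    M.fv ⊆ xs.toFinset ∧ Red (apps (lams xs M) Ns) (lam y (var y))

/-- One-step head reduction: contraction of the head redex. -/
inductive HeadStep : Tm → Tm → Prop
  | beta (x : ℕ) (M N : Tm) (Ms : List Tm) :
      HeadStep (apps (app (lam x M) N) Ms) (apps (subst1 x N M) Ms)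
  | abs (x : ℕ) {M M' : Tm} : HeadStep M M' → HeadStep (lam x M) (lam x M')

end Tm

/-- Intersection types over a set `A` of constants, with top `𝖴`. -/
inductive Ty (A : Type) : Type
  | const : A → Ty A
  | top : Ty A
  | arrow : Ty A → Ty A → Ty A
  | inter : Ty A → Ty A → Ty A
deriving DecidableEq

/-- An intersection type theory: a subtyping relation on `Ty A` closed under
(Refl), (IncL), (IncR), (𝖴top), (Glb), (Trans) and (→∼). -/
structure ITT (A : Type) where
  le : Ty A → Ty A → Prop
  le_refl : ∀ a, le a a
  le_incL : ∀ a b, le (Ty.inter b a) b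
  le_incR : ∀ a b, le (Ty.inter b a) a
  le_top : ∀ a, le a Ty.top
  le_glb : ∀ {a b c}, le c a → le c b → le c (Ty.inter a b)
  le_trans : ∀ {a b c}, le a b → le b c → le a c
  arrow_cong : ∀ {a a' b b'}, le a a' → le a' a → le b b' → le b' b →
      le (Ty.arrow a b) (Ty.arrow a' b')

variable {A : Type}

/-- The equivalence `∼` induced by the subtyping. -/
def ITT.eqv (T : ITT A) (a b : Ty A) : Prop := T.le a b ∧ T.le b a

/-- Bases: (partial) mappings from term variables to types. -/
def Ctx (A : Type) := ℕ → Option (Ty A)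

def Ctx.empty : Ctx A := fun _ => none

/-- `Γ, x:a`. -/
def Ctx.update (Γ : Ctx A) (x : ℕ) (a : Ty A) : Ctx A :=
  fun y => if y = x then some a else Γ y

/-- The intersection type assignment system induced by an itt `T`:
rules (Ax), (𝖴), (→I), (→E), (∩I) and (≤). -/
inductive Der (T : ITT A) : Ctx A → Tm → Ty A → Prop
  | ax {Γ : Ctx A} {x a} : Γ x = some a → Der T Γ (Tm.var x) a
  | top {Γ M} : Der T Γ M Ty.top
  | arrI {Γ : Ctx A} {x M a b} :
      Der T (Γ.update x b) M a → Der T Γ (Tm.lam x M) (Ty.arrow b a)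
  | arrE {Γ M N a b} :
      Der T Γ M (Ty.arrow b a) → Der T Γ N b → Der T Γ (Tm.app M N) a
  | interI {Γ M a b} : Der T Γ M a → Der T Γ M b → Der T Γ M (Ty.inter a b)
  | sub {Γ M a b} : Der T Γ M a → T.le a b → Der T Γ M b

/-- Finite intersection `⋂_{i∈I} Aᵢ`, with `⋂_∅ = 𝖴`. -/
def interList : List (Ty A) → Ty A
  | [] => Ty.top
  | a :: l => Ty.inter a (interList l)

/-- Inversion for variables: if `Γ ⊢ x : A` and `A ≁_𝒯 𝖴`,
then `x` is declared in `Γ` and `Γ(x) ≤_𝒯 A`. -/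
theorem inversion_var {A : Type} (T : ITT A) (Γ : Ctx A) (x : ℕ) (a : Ty A)
    (h : Der T Γ (Tm.var x) a) (ha : ¬ T.eqv a Ty.top) :
    ∃ b : Ty A, Γ x = some b ∧ T.le b a := by
  generalize hM : Tm.var x = M at h
  induction h with
  | ax hx => cases hM; exact ⟨_, hx, T.le_refl _⟩
  | top => exact absurd ⟨T.le_top _, T.le_refl _⟩ ha
  | arrI _ _ => cases hM
  | arrE _ _ _ _ => cases hM
  | @interI Γ' M' a1 a2 h1 h2 ih1 ih2 =>
    by_cases h1t : T.eqv a1 Ty.top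
    · by_cases h2t : T.eqv a2 Ty.top
      · exact absurd ⟨T.le_top _, T.le_glb h1t.2 h2t.2⟩ ha
      · obtain ⟨b, hb, hle⟩ := ih2 h2t hM
        exact ⟨b, hb, T.le_glb (T.le_trans (T.le_top _) h1t.2) hle⟩
    · obtain ⟨b, hb, hle⟩ := ih1 h1t hM
      by_cases h2t : T.eqv a2 Ty.top
      · exact ⟨b, hb, T.le_glb hle (T.le_trans (T.le_top _) h2t.2)⟩
      · obtain ⟨b', hb', hle'⟩ := ih2 h2t hM
        rw [hb] at hb'
        exact ⟨b, hb, T.le_glb hle (by cases hb'; exact hle')⟩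
  | @sub Γ' M' a1 a2 h hle ih =>
    have hnt : ¬ T.eqv a1 Ty.top := fun ht =>
      ha ⟨T.le_top _, T.le_trans ht.2 hle⟩
    obtain ⟨b, hb, hle'⟩ := ih hnt hM
    exact ⟨b, hb, T.le_trans hle' hle⟩
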